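/- arXiv:1609.03549 — 3 statements merged into one kernel-verified Lean document; each statement's English description precedes it below -/
import Mathlib

section
/- The quasi-shuffle product on words over a commutative semigroup Ω is associative. -/
/-- The quasi-shuffle product of two words over a commutative semigroup `Ω`,
with values in the free `ℤ`-module spanned by words. -/
noncomputable def qsh {Ω : Type*} [AddCommSemigroup Ω] :
    List Ω → List Ω → (List Ω →₀ ℤ)
  | [], w => Finsupp.single w 1
  | a :: w', [] => Finsupp.single (a :: w') 1
  | a :: w', b :: w'' =>
      Finsupp.mapDomain (a :: ·) (qsh w' (b :: w''))
    + Finsupp.mapDomain (b :: ·) (qsh (a :: w') w'')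
    + Finsupp.mapDomain ((a + b) :: ·) (qsh w' w'')
  termination_by w₁ w₂ => w₁.length + w₂.length

/-!
Once the quasi-shuffle is extended bilinearly, its defining recursion holds for arbitrary
elements `a f`, `b g` of the free module, not only for words. With it,
both `(au ⧢ bv) ⧢ cw` and `au ⧢ (bv ⧢ cw)` expand into seven terms, led by the letters
`a`, `b`, `c`, `a + b`, `a + c`, `b + c`, `a + b + c`, each followed by a triple product of
smaller total length; induction on that length matches the expansions term by term
(the last one by associativity of `Ω`).
-/

open Finsupp

section

variable {Ω : Type*}

noncomputable def prepend (a : Ω) : (List Ω →₀ ℤ) →ₗ[ℤ] (List Ω →₀ ℤ) :=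
  lmapDomain ℤ ℤ (List.cons a)

theorem prepend_single (a : Ω) (w : List Ω) (c : ℤ) :
    prepend a (single w c) = single (a :: w) c := by
  simp [prepend, mapDomain_single]

variable [AddCommSemigroup Ω]

theorem qsh_nil_left (w : List Ω) : qsh [] w = single w 1 := by
  rw [qsh]

theorem qsh_nil_right (w : List Ω) : qsh w [] = single w 1 := by
  cases w <;> rw [qsh]

theorem qsh_cons_cons (a b : Ω) (u v : List Ω) :
    qsh (a :: u) (b :: v) =
      prepend a (qsh u (b :: v)) + prepend b (qsh (a :: u) v) + prepend (a + b) (qsh u v) := by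
  rw [qsh]; rfl

variable (Ω) in
noncomputable def qshLin : (List Ω →₀ ℤ) →ₗ[ℤ] (List Ω →₀ ℤ) →ₗ[ℤ] (List Ω →₀ ℤ) :=
  linearCombination ℤ fun u => linearCombination ℤ (qsh u)

local infixl:70 " ⋆ " => qshLin _

theorem qshLin_single_left (u : List Ω) (g : List Ω →₀ ℤ) :
    single u 1 ⋆ g = g.sum fun v d => d • qsh u v := by
  simp [qshLin, linearCombination_apply]

theorem qshLin_single_right (f : List Ω →₀ ℤ) (w : List Ω) :
    f ⋆ single w 1 = f.sum fun u c => c • qsh u w := by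
  simp [qshLin, linearCombination_apply]

theorem qshLin_single_single (u v : List Ω) (c d : ℤ) :
    single u c ⋆ single v d = (c * d) • qsh u v := by
  simp [qshLin, smul_smul, mul_comm]

theorem single_nil_qshLin (g : List Ω →₀ ℤ) : single [] 1 ⋆ g = g := by
  simp only [qshLin_single_left, qsh_nil_left, smul_single_one, sum_single]

theorem qshLin_single_nil (f : List Ω →₀ ℤ) : f ⋆ single [] 1 = f := by
  simp only [qshLin_single_right, qsh_nil_right, smul_single_one, sum_single]

theorem prepend_qshLin_prepend (a b : Ω) (f g : List Ω →₀ ℤ) :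
    prepend a f ⋆ prepend b g =
      prepend a (f ⋆ prepend b g) + prepend b (prepend a f ⋆ g) + prepend (a + b) (f ⋆ g) := by
  induction f using induction_linear generalizing g with
  | zero => simp
  | add f₁ f₂ h₁ h₂ => simp only [map_add, LinearMap.add_apply, h₁, h₂]; abel
  | single u c =>
    induction g using induction_linear with
    | zero => simp
    | add g₁ g₂ h₁ h₂ => simp only [map_add, h₁, h₂]; abel
    | single v d =>
      simp only [prepend_single, qshLin_single_single, qsh_cons_cons, smul_add, map_smul]

theorem qsh_cons_cons_qshLin (a b c : Ω) (u v w : List Ω) :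
    qsh (a :: u) (b :: v) ⋆ single (c :: w) 1 =
      prepend a (qsh u (b :: v) ⋆ single (c :: w) 1)
      + prepend b (qsh (a :: u) v ⋆ single (c :: w) 1)
      + prepend c (qsh (a :: u) (b :: v) ⋆ single w 1)
      + prepend (a + b) (qsh u v ⋆ single (c :: w) 1)
      + prepend (a + c) (qsh u (b :: v) ⋆ single w 1)
      + prepend (b + c) (qsh (a :: u) v ⋆ single w 1)
      + prepend (a + b + c) (qsh u v ⋆ single w 1) := by
  rw [← prepend_single c w, qsh_cons_cons a b u v]
  simp only [map_add, LinearMap.add_apply, prepend_qshLin_prepend]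
  abel

theorem single_qshLin_qsh_cons_cons (a b c : Ω) (u v w : List Ω) :
    single (a :: u) 1 ⋆ qsh (b :: v) (c :: w) =
      prepend a (single u 1 ⋆ qsh (b :: v) (c :: w))
      + prepend b (single (a :: u) 1 ⋆ qsh v (c :: w))
      + prepend c (single (a :: u) 1 ⋆ qsh (b :: v) w)
      + prepend (a + b) (single u 1 ⋆ qsh v (c :: w))
      + prepend (a + c) (single u 1 ⋆ qsh (b :: v) w)
      + prepend (b + c) (single (a :: u) 1 ⋆ qsh v w)
      + prepend (a + b + c) (single u 1 ⋆ qsh v w) := by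
  rw [← prepend_single a u, qsh_cons_cons b c v w]
  simp only [map_add, prepend_qshLin_prepend, add_assoc a b c]
  abel

theorem qsh_qshLin_single (u v w : List Ω) :
    qsh u v ⋆ single w 1 = single u 1 ⋆ qsh v w := by
  match u, v, w with
  | u, [], w => rw [qsh_nil_right, qsh_nil_left]
  | [], v, w => rw [qsh_nil_left, single_nil_qshLin, qshLin_single_single, one_mul, one_smul]
  | u, v, [] => rw [qsh_nil_right, qshLin_single_nil, qshLin_single_single, one_mul, one_smul]
  | a :: u, b :: v, c :: w =>
    rw [qsh_cons_cons_qshLin, single_qshLin_qsh_cons_cons, qsh_qshLin_single u (b :: v) (c :: w),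
      qsh_qshLin_single (a :: u) v (c :: w), qsh_qshLin_single (a :: u) (b :: v) w,
      qsh_qshLin_single u v (c :: w), qsh_qshLin_single u (b :: v) w,
      qsh_qshLin_single (a :: u) v w, qsh_qshLin_single u v w]
termination_by u.length + v.length + w.length

end

/-- the quasi-shuffle product is associative (after extending it
bilinearly to the free module spanned by words). -/
theorem qsh_assoc {Ω : Type*} [AddCommSemigroup Ω] (u v w : List Ω) :
    (qsh u v).sum (fun x c => c • qsh x w) =
      (qsh v w).sum (fun x c => c • qsh u x) := by
  rw [← qshLin_single_right, ← qshLin_single_left, qsh_qshLin_single]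
end

section
/- Mould composition, defined by (M∘N)^w = Σ_{s≥1} Σ_{w = w¹.⋯.wˢ} M^{‖w¹‖⋯‖wˢ‖} N^{w¹}⋯N^{wˢ}, where the sum runs over all decompositions of w into s nonempty words, is associative. -/
/-- Weight of a word: the internal sum of its letters in the commutative
semigroup `Ω` (a junk default value is used for the empty word, which never
occurs as a block of a composition). -/
def wt {Ω : Type*} [AddCommSemigroup Ω] [Inhabited Ω] : List Ω → Ω
  | [] => default
  | a :: l => l.foldl (· + ·) a

/-- Mould composition:
`(M ∘ N)^w = ∑_{s ≥ 1} ∑_{w = w¹.⋯.wˢ} M^{‖w¹‖⋯‖wˢ‖} N^{w¹} ⋯ N^{wˢ}`,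
the sum running over all decompositions of `w` into `s` nonempty words
(encoded by compositions of the length of `w`), with `(M ∘ N)^∅ = M^∅`. -/
noncomputable def mcomp {Ω A : Type*} [AddCommSemigroup Ω] [Inhabited Ω] [CommRing A]
    (M N : List Ω → A) : List Ω → A := fun w =>
  if w.isEmpty then M [] else
  ∑ c : Composition w.length,
    M ((w.splitWrtComposition c).map wt) * ((w.splitWrtComposition c).map N).prod


open List
set_option linter.unusedSectionVars false

section auxlist

lemma map_splitWrtCompositionAux {α β : Type*} (f : α → β) :
    ∀ (ns : List ℕ) (l : List α),
      map (map f) (l.splitWrtCompositionAux ns) = (l.map f).splitWrtCompositionAux ns := by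
  intro ns
  induction ns with
  | nil => intro l; rfl
  | cons n ns ih =>
    intro l
    rw [splitWrtCompositionAux_cons, splitWrtCompositionAux_cons, map_cons, ih, map_take, map_drop]

lemma splitWrtCompositionAux_flatten {α : Type*} :
    ∀ (L : List (List α)) (ns : List ℕ), map length L = ns →
      L.flatten.splitWrtCompositionAux ns = L := by
  intro L
  induction L with
  | nil => rintro _ rfl; rfl
  | cons l L ih =>
    rintro _ rfl
    rw [flatten_cons, map_cons, splitWrtCompositionAux_cons, take_left, drop_left, ih _ rfl]

lemma prod_map_eq_prod_fin {α A : Type*} [CommMonoid A] (l : List α) (f : α → A) {m : ℕ}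
    (h : l.length = m) :
    (l.map f).prod = ∏ i : Fin m, f (l[i.1]'(h ▸ i.2)) := by
  subst h
  conv_lhs => rw [← List.ofFn_getElem (xs := l)]
  rw [List.map_ofFn, List.prod_ofFn]
  rfl

end auxlist

section mouldaux
variable {Ω A : Type*} [AddCommSemigroup Ω] [Inhabited Ω] [CommRing A]

variable {Ω : Type*} [AddCommSemigroup Ω] [Inhabited Ω]


lemma foldl_add_assoc (x b : Ω) (m : List Ω) :
    m.foldl (· + ·) (x + b) = x + m.foldl (· + ·) b := by
  induction m generalizing b with
  | nil => rfl
  | cons c m ih => simp only [foldl_cons, add_assoc]; exact ih (b + c)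

lemma wt_cons (x : Ω) {m : List Ω} (hm : m ≠ []) : wt (x :: m) = x + wt m := by
  obtain ⟨b, m', rfl⟩ := List.exists_cons_of_ne_nil hm
  show (b :: m').foldl (· + ·) x = x + m'.foldl (· + ·) b
  simp only [foldl_cons]
  exact foldl_add_assoc x b m'

lemma wt_append {l m : List Ω} (hl : l ≠ []) (hm : m ≠ []) :
    wt (l ++ m) = wt l + wt m := by
  obtain ⟨a, l', rfl⟩ := List.exists_cons_of_ne_nil hl
  obtain ⟨b, m', rfl⟩ := List.exists_cons_of_ne_nil hm
  show ((l' ++ b :: m').foldl (· + ·) a) = l'.foldl (· + ·) a + m'.foldl (· + ·) b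
  rw [foldl_append, foldl_cons, foldl_add_assoc]

lemma wt_flatten : ∀ {L : List (List Ω)}, L ≠ [] → (∀ l ∈ L, l ≠ []) →
    wt L.flatten = wt (L.map wt) := by
  intro L
  induction L with
  | nil => intro h; exact absurd rfl h
  | cons l L ih =>
    intro _ hmem
    rcases eq_or_ne L [] with rfl | hL
    · simp [wt]
    · have hl : l ≠ [] := hmem l (by simp)
      have hLmem : ∀ x ∈ L, x ≠ [] := fun x hx => hmem x (by simp [hx])
      have hflat : L.flatten ≠ [] := by
        obtain ⟨y, L', rfl⟩ := List.exists_cons_of_ne_nil hL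
        have hy : y ≠ [] := hLmem y (by simp)
        simpa using List.append_ne_nil_of_left_ne_nil hy L'.flatten
      have hmapwt : L.map wt ≠ [] := by simpa using hL
      show wt (l ++ L.flatten) = wt (wt l :: L.map wt)
      rw [wt_append hl hflat, wt_cons _ hmapwt, ih hL hLmem]


lemma mcomp_eq_sum (M N : List Ω → A) {w : List Ω} (hw : w ≠ []) {n : ℕ} (h : w.length = n) :
    mcomp M N w = ∑ c : Composition n,
      M ((w.splitWrtComposition c).map wt) * ((w.splitWrtComposition c).map N).prod := by
  subst h
  simp [mcomp, hw]

lemma mcomp_left_expand (M N P : List Ω → A) (w : List Ω) (hw : w ≠ []) :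
    mcomp (mcomp M N) P w =
      ∑ p : Σ a : Composition w.length, Composition a.length,
        M ((((w.splitWrtComposition p.1).map wt).splitWrtComposition p.2).map wt) *
          ((((w.splitWrtComposition p.1).map wt).splitWrtComposition p.2).map N).prod *
          ((w.splitWrtComposition p.1).map P).prod := by
  have hn : 0 < w.length := List.length_pos_of_ne_nil hw
  rw [mcomp_eq_sum (mcomp M N) P hw rfl]
  have step : ∀ a : Composition w.length,
      mcomp M N ((w.splitWrtComposition a).map wt) *
        ((w.splitWrtComposition a).map P).prod
      = ∑ b : Composition a.length,
          M ((((w.splitWrtComposition a).map wt).splitWrtComposition b).map wt) *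
            ((((w.splitWrtComposition a).map wt).splitWrtComposition b).map N).prod *
            ((w.splitWrtComposition a).map P).prod := by
    intro a
    have hlen : ((w.splitWrtComposition a).map wt).length = a.length := by
      simp [List.length_splitWrtComposition]
    have hne : (w.splitWrtComposition a).map wt ≠ [] := by
      have := a.length_pos_of_pos hn
      intro h
      rw [h] at hlen
      simp at hlen
      omega
    rw [mcomp_eq_sum M N hne hlen, Finset.sum_mul]
  simp only [step]
  rw [Finset.sum_sigma']
  rfl

lemma length_block {w : List Ω} (c : Composition w.length) (i : Fin c.length) :
    ((w.splitWrtComposition c)[i.1]'(by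
      rw [List.length_splitWrtComposition]; exact i.2)).length = c.blocksFun i := by
  have h := List.map_length_splitWrtComposition w c
  have : ((w.splitWrtComposition c).map length)[i.1]'(by
      rw [List.length_map, List.length_splitWrtComposition]; exact i.2) =
      c.blocks[i.1]'(i.2) := by
    simp only [h]
  rw [List.getElem_map] at this
  rw [this]
  rfl

lemma block_ne_nil {w : List Ω} (c : Composition w.length) (i : Fin c.length) :
    ((w.splitWrtComposition c)[i.1]'(by
      rw [List.length_splitWrtComposition]; exact i.2)) ≠ [] := by
  apply List.ne_nil_of_length_pos
  apply List.length_pos_of_mem_splitWrtComposition (l := w) (c := c)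
  exact List.getElem_mem _

lemma mcomp_right_expand (M N P : List Ω → A) (w : List Ω) (hw : w ≠ []) :
    mcomp M (mcomp N P) w =
      ∑ p : Σ c : Composition w.length, ∀ i : Fin c.length, Composition (c.blocksFun i),
        M ((w.splitWrtComposition p.1).map wt) *
        ∏ i : Fin p.1.length,
          (N ((((w.splitWrtComposition p.1)[i.1]'(by
              rw [List.length_splitWrtComposition]; exact i.2)).splitWrtComposition
              (p.2 i)).map wt) *
           ((((w.splitWrtComposition p.1)[i.1]'(by
              rw [List.length_splitWrtComposition]; exact i.2)).splitWrtComposition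
              (p.2 i)).map P).prod) := by
  rw [mcomp_eq_sum M (mcomp N P) hw rfl]
  have step : ∀ c : Composition w.length,
      M ((w.splitWrtComposition c).map wt) *
        ((w.splitWrtComposition c).map (mcomp N P)).prod
      = ∑ E : ∀ i : Fin c.length, Composition (c.blocksFun i),
          M ((w.splitWrtComposition c).map wt) *
          ∏ i : Fin c.length,
            (N ((((w.splitWrtComposition c)[i.1]'(by
                rw [List.length_splitWrtComposition]; exact i.2)).splitWrtComposition
                (E i)).map wt) *
             ((((w.splitWrtComposition c)[i.1]'(by
                rw [List.length_splitWrtComposition]; exact i.2)).splitWrtComposition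
                (E i)).map P).prod) := by
    intro c
    rw [prod_map_eq_prod_fin _ _ (List.length_splitWrtComposition w c)]
    have inner : ∀ i : Fin c.length,
        mcomp N P ((w.splitWrtComposition c)[i.1]'(by
          rw [List.length_splitWrtComposition]; exact i.2))
        = ∑ e : Composition (c.blocksFun i),
            N ((((w.splitWrtComposition c)[i.1]'(by
              rw [List.length_splitWrtComposition]; exact i.2)).splitWrtComposition e).map wt) *
            ((((w.splitWrtComposition c)[i.1]'(by
              rw [List.length_splitWrtComposition]; exact i.2)).splitWrtComposition e).map P).prod :=
      fun i => mcomp_eq_sum N P (block_ne_nil c i) (length_block c i)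
    simp only [inner]
    rw [Finset.prod_univ_sum, Fintype.piFinset_univ, Finset.mul_sum]
  simp only [step]
  rw [Finset.sum_sigma']
  rfl

end mouldaux

/-- mould composition is associative. -/
theorem mcomp_assoc {Ω A : Type*} [AddCommSemigroup Ω] [Inhabited Ω] [CommRing A]
    (M N P : List Ω → A) :
    mcomp (mcomp M N) P = mcomp M (mcomp N P) := by
  funext w
  rcases eq_or_ne w [] with rfl | hw
  · simp [mcomp]
  rw [mcomp_left_expand M N P w hw, mcomp_right_expand M N P w hw,
    ← Equiv.sum_comp (Composition.sigmaEquivSigmaPi w.length)]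
  apply Finset.sum_congr rfl
  rintro ⟨a, b⟩ -
  simp only [Composition.sigmaEquivSigmaPi, Equiv.coe_fn_mk]
  set L := w.splitWrtComposition a with hLdef
  set G := L.splitWrtComposition b with hGdef2
  have hLlen : L.length = a.length := List.length_splitWrtComposition w a
  have hlenL : map length L = a.blocks := List.map_length_splitWrtComposition w a
  have hGdef : G = L.splitWrtCompositionAux b.blocks := rfl
  have hGmaplen : map (map length) G = a.blocks.splitWrtCompositionAux b.blocks := by
    rw [hGdef, map_splitWrtCompositionAux, hlenL]
  have hflatG : G.flatten = L :=
    List.flatten_splitWrtCompositionAux (by rw [b.blocks_sum, hLlen])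
  have hflatL : L.flatten = w := List.flatten_splitWrtComposition w a
  have hGlen : G.length = b.length := List.length_splitWrtCompositionAux _ _
  have hGlen' : G.length = (a.gather b).length := by
    rw [hGlen, Composition.length_gather]
  -- the split of `w` along the gathered composition is obtained by flattening groups
  have hsplitc : w.splitWrtComposition (a.gather b) = G.map flatten := by
    have h1 : (G.map flatten).flatten = w := by
      rw [← List.flatten_flatten, hflatG, hflatL]
    have h2 : map length (G.map flatten) = (a.gather b).blocks := by
      show _ = map sum (a.blocks.splitWrtComposition b)
      rw [map_map]
      have : (length ∘ flatten : List (List Ω) → ℕ) = (fun g => (map length g).sum) := by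
        funext g; exact g.length_flatten
      rw [this, show (fun g : List (List Ω) => (map length g).sum) = sum ∘ (map length) from rfl,
        ← map_map, hGmaplen]
      rfl
    calc w.splitWrtComposition (a.gather b)
        = ((G.map flatten).flatten).splitWrtCompositionAux (a.gather b).blocks := by rw [h1]; rfl
      _ = G.map flatten := splitWrtCompositionAux_flatten _ _ h2
  -- identify each inner split with the corresponding group
  have hblocki : ∀ (i : Fin (a.gather b).length) (hiw : i.1 < (w.splitWrtComposition (a.gather b)).length)
      (hiG : i.1 < G.length),
      ((w.splitWrtComposition (a.gather b))[i.1]'hiw).splitWrtComposition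
        (a.sigmaCompositionAux b i) = G[i.1]'hiG := by
    intro i hiw hiG
    have h1 : (w.splitWrtComposition (a.gather b))[i.1]'hiw = (G[i.1]'hiG).flatten := by
      simp only [hsplitc, List.getElem_map]
    rw [h1]
    apply splitWrtCompositionAux_flatten
    have hb : i.1 < (a.blocks.splitWrtCompositionAux b.blocks).length := by
      rw [List.length_splitWrtCompositionAux]
      exact lt_of_lt_of_eq i.2 (Composition.length_gather a b)
    show map length (G[i.1]'hiG) = (a.blocks.splitWrtCompositionAux b.blocks)[i.1]'hb
    simp only [← hGmaplen, List.getElem_map]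
  -- rewrite the big product as a product over the list `G`
  have hprod : (∏ i : Fin (a.gather b).length,
        (N ((((w.splitWrtComposition (a.gather b))[i.1]'(by
            rw [List.length_splitWrtComposition]; exact i.2)).splitWrtComposition
            (a.sigmaCompositionAux b i)).map wt) *
         ((((w.splitWrtComposition (a.gather b))[i.1]'(by
            rw [List.length_splitWrtComposition]; exact i.2)).splitWrtComposition
            (a.sigmaCompositionAux b i)).map P).prod))
      = (G.map (fun g => N (g.map wt) * ((g.map P).prod))).prod := by
    rw [prod_map_eq_prod_fin G (fun g => N (g.map wt) * ((g.map P).prod)) hGlen']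
    apply Finset.prod_congr rfl
    intro i _
    rw [hblocki i _ (lt_of_lt_of_eq i.2 hGlen'.symm)]
  erw [hprod]
  -- nonemptiness facts
  have hGne : ∀ g ∈ G, g ≠ [] := by
    intro g hg
    have hmaplenG : map length G = b.blocks := by
      rw [hGdef]
      exact List.map_length_splitWrtCompositionAux (by rw [b.blocks_sum, hLlen])
    have : g.length ∈ b.blocks := by
      rw [← hmaplenG]; exact List.mem_map_of_mem (f := length) hg
    exact List.ne_nil_of_length_pos (b.blocks_pos this)
  have hGmem : ∀ g ∈ G, ∀ x ∈ g, x ≠ [] := by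
    intro g hg x hx
    have hxL : x ∈ L := by
      rw [← hflatG]; exact List.mem_flatten_of_mem hg hx
    have : x.length ∈ a.blocks := by
      rw [← hlenL]; exact List.mem_map_of_mem (f := length) hxL
    exact List.ne_nil_of_length_pos (a.blocks_pos this)
  -- rewrite the left-hand side pieces
  have husplit : (L.map wt).splitWrtComposition b = G.map (map wt) :=
    (map_splitWrtCompositionAux wt b.blocks L).symm
  have hPfact : (L.map P).prod = (G.map (fun g => ((g.map P).prod))).prod := by
    rw [← hflatG, List.map_flatten, List.prod_flatten, map_map]
    rfl
  rw [husplit, hPfact, hsplitc, map_map, map_map, map_map]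
  have hMarg : G.map (wt ∘ map wt) = G.map (wt ∘ flatten) := by
    apply List.map_congr_left
    intro g hg
    exact (wt_flatten (hGne g hg) (hGmem g hg)).symm
  rw [hMarg, mul_assoc]
  congr 1
  rw [← List.prod_map_mul]
  rfl
end

section
/- Any weak (p,q)-quasi-shuffle φ: {1,…,p+q} ↠ {1,…,s} admits a unique factorization φ = δ∘σ where σ: {1,…,p+q} ↠ {1,…,t} is a nondecreasing surjection with σ(p) < σ(p+1), and δ: {1,…,t} ↠ {1,…,s} is a (σ(p), t−σ(p))-quasi-shuffle. -/
/-! Tag each position `i` with `(p ≤ i, φ i) : Bool ×ₗ Fin s`; for a weak quasi-shuffle the tag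
is monotone in `i`. A factorization `φ = δ ∘ σ` of the required kind makes `σ` induce on positions
exactly the preorder of the tags, and a surjection onto some `Fin t` is determined, together with
`t`, by the preorder it induces. So `σ` can only be the rank of the tag within the image of the tag
map, `δ` then reads off the second component, and this pair does satisfy all requirements. -/

/-- `φ : {1,…,p+q} → {1,…,s}` is a weak `(p,q)`-quasi-shuffle: a surjection
which is nondecreasing on the first `p` positions and on the last `q`
positions (positions are `0`-indexed via `Fin`). -/
def IsWeakQSh (p q s : ℕ) (φ : Fin (p + q) → Fin s) : Prop :=
  Function.Surjective φ ∧
  (∀ i j : Fin (p + q), i.val < j.val → j.val < p → φ i ≤ φ j) ∧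
  (∀ i j : Fin (p + q), p ≤ i.val → i.val < j.val → φ i ≤ φ j)

/-- `δ : {1,…,p'+q'} → {1,…,s}` is a `(p',q')`-quasi-shuffle (here the first
block is described by a cut point `k = p'`): a surjection strictly
increasing on the first `k` positions and on the remaining ones. -/
def IsQShCut (t s k : ℕ) (δ : Fin t → Fin s) : Prop :=
  Function.Surjective δ ∧
  (∀ i j : Fin t, i.val < j.val → j.val < k → δ i < δ j) ∧
  (∀ i j : Fin t, k ≤ i.val → i.val < j.val → δ i < δ j)

open Function

theorem exists_surjective_fin_orderEmbedding_comp {α β : Type*} [Fintype α] [LinearOrder β]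
    (g : α → β) : ∃ (t : ℕ) (σ : α → Fin t) (e : Fin t ↪o β), Surjective σ ∧ e ∘ σ = g := by
  set S := Finset.univ.image g
  let iso := S.orderIsoOfFin rfl
  refine ⟨S.card, fun a => iso.symm ⟨g a, Finset.mem_image_of_mem g (Finset.mem_univ a)⟩,
    S.orderEmbOfFin rfl, fun v => ?_, funext fun a => ?_⟩
  · obtain ⟨a, -, ha⟩ := Finset.mem_image.1 (iso v).2
    exact ⟨a, iso.symm_apply_eq.2 (Subtype.ext ha)⟩
  · simp [iso, ← Finset.coe_orderIsoOfFin_apply]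

theorem Fin.val_eq_of_surjective_of_le_iff_le {α : Type*} {t t' : ℕ} {σ : α → Fin t}
    {τ : α → Fin t'} (hσ : Surjective σ) (hτ : Surjective τ)
    (h : ∀ a b, σ a ≤ σ b ↔ τ a ≤ τ b) : t = t' ∧ ∀ a, (σ a : ℕ) = τ a := by
  let e : Fin t → Fin t' := fun v => τ (surjInv hσ v)
  have he : ∀ a, e (σ a) = τ a := fun a => by
    have := surjInv_eq hσ (σ a)
    exact le_antisymm ((h _ _).1 this.le) ((h _ _).1 this.ge)
  have hmono : StrictMono e := by
    intro v w hvw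
    obtain ⟨a, rfl⟩ := hσ v
    obtain ⟨b, rfl⟩ := hσ w
    rw [he, he, ← not_le, ← h, not_le]
    exact hvw
  have hsurj : Surjective e := fun w => by
    obtain ⟨a, rfl⟩ := hτ w
    exact ⟨σ a, he a⟩
  let iso := hmono.orderIsoOfSurjective e hsurj
  exact ⟨Fin.equiv_iff_eq.1 ⟨iso.toEquiv⟩, fun a => he a ▸ (Fin.coe_orderIso_apply iso (σ a)).symm⟩

theorem Monotone.le_iff_le_of_covBy {α β : Type*} [LinearOrder α] [Preorder β] {f : α → β}
    (hf : Monotone f) {a b : α} (hab : a ⋖ b) (hfab : f a < f b) (c : α) :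
    f c ≤ f a ↔ c ≤ a :=
  ⟨fun hc => not_lt.1 fun hac => (hfab.trans_le (hf (hab.ge_of_gt hac))).not_ge hc, fun hc => hf hc⟩

theorem isQShCut_iff_of_covBy {n t s : ℕ} {σ : Fin n → Fin t} (hσs : Surjective σ)
    (hσ : Monotone σ) {a b : Fin n} (hab : a ⋖ b) (hjump : σ a < σ b) {δ : Fin t → Fin s} :
    IsQShCut t s ((σ a : ℕ) + 1) δ ↔ Surjective δ ∧
      ∀ x y, (x ≤ a ↔ y ≤ a) → σ x < σ y → δ (σ x) < δ (σ y) := by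
  have hblock x : (σ x : ℕ) < σ a + 1 ↔ x ≤ a := by
    rw [Nat.lt_succ_iff, ← Fin.le_def, hσ.le_iff_le_of_covBy hab hjump]
  constructor
  · refine fun hδ => ⟨hδ.1, fun x y hxy hlt => ?_⟩
    by_cases hy : y ≤ a
    · exact hδ.2.1 _ _ hlt ((hblock y).2 hy)
    · exact hδ.2.2 _ _ (not_lt.1 fun hx => hy (hxy.1 ((hblock x).1 hx))) hlt
  · refine fun ⟨hδs, h⟩ => ⟨hδs, fun v w hvw hw => ?_, fun v w hv hvw => ?_⟩
    all_goals
      obtain ⟨x, rfl⟩ := hσs v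
      obtain ⟨y, rfl⟩ := hσs w
      refine h x y ?_ hvw
      rw [← hblock x, ← hblock y]
      omega

def blockTag (p : ℕ) {n s : ℕ} (φ : Fin n → Fin s) (i : Fin n) : Bool ×ₗ Fin s :=
  toLex (decide (p ≤ (i : ℕ)), φ i)

theorem blockTag_lt_blockTag_iff {p n s : ℕ} {φ : Fin n → Fin s} {i j : Fin n} :
    blockTag p φ i < blockTag p φ j ↔
      (i : ℕ) < p ∧ p ≤ (j : ℕ) ∨ (((i : ℕ) < p ↔ (j : ℕ) < p) ∧ φ i < φ j) := by
  simp only [blockTag, Prod.Lex.toLex_lt_toLex, Bool.lt_iff, decide_eq_false_iff_not,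
    decide_eq_true_eq, decide_eq_decide, not_le]
  omega

theorem blockTag_eq_blockTag_iff {p n s : ℕ} {φ : Fin n → Fin s} {i j : Fin n} :
    blockTag p φ i = blockTag p φ j ↔ ((i : ℕ) < p ↔ (j : ℕ) < p) ∧ φ i = φ j := by
  simp only [blockTag, toLex_inj, Prod.ext_iff, decide_eq_decide]
  omega

theorem IsWeakQSh.monotone_blockTag {p q s : ℕ} {φ : Fin (p + q) → Fin s} (hφ : IsWeakQSh p q s φ) :
    Monotone (blockTag p φ) := by
  intro i j hij
  rcases hij.lt_or_eq with hij | rfl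
  · simp only [blockTag, Prod.Lex.toLex_le_toLex, Bool.lt_iff, decide_eq_false_iff_not,
      decide_eq_true_eq, decide_eq_decide, not_le]
    by_cases hjp : (j : ℕ) < p
    · exact Or.inr ⟨by omega, hφ.2.1 i j hij hjp⟩
    by_cases hip : p ≤ (i : ℕ)
    · exact Or.inr ⟨by omega, hφ.2.2 i j hip hij⟩
    · exact Or.inl (by omega)
  · rfl

theorem le_iff_blockTag_le_of_comp_eq {n t s : ℕ} {φ : Fin n → Fin s} {σ : Fin n → Fin t}
    {δ : Fin t → Fin s} (hσs : Surjective σ) (hσ : Monotone σ) {a b : Fin n} (hab : a ⋖ b)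
    (hjump : σ a < σ b) (hδ : IsQShCut t s ((σ a : ℕ) + 1) δ) (hcomp : φ = δ ∘ σ) (x y : Fin n) :
    σ x ≤ σ y ↔ blockTag b φ x ≤ blockTag b φ y := by
  obtain ⟨-, hδlt⟩ := (isQShCut_iff_of_covBy hσs hσ hab hjump).1 hδ
  have hcut x : x ≤ a ↔ (x : ℕ) < b := by
    have := Nat.covBy_iff_add_one_eq.1 (Fin.covBy_iff.1 hab)
    rw [Fin.le_def]
    omega
  have hlt x y : σ x < σ y → blockTag b φ x < blockTag b φ y := by
    intro hxy
    rw [blockTag_lt_blockTag_iff]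
    by_cases hsame : x ≤ a ↔ y ≤ a
    · exact Or.inr ⟨by rwa [← hcut, ← hcut], hcomp ▸ hδlt x y hsame hxy⟩
    have hxa : x ≤ a := by
      by_contra hxa
      have hya : y ≤ a := by tauto
      exact (hσ.le_iff_le_of_covBy hab hjump x).not.2 hxa
        (hxy.le.trans ((hσ.le_iff_le_of_covBy hab hjump y).2 hya))
    have hya : ¬ y ≤ a := by tauto
    rw [hcut] at hxa hya
    exact Or.inl ⟨hxa, not_lt.1 hya⟩
  have heq x y : σ x = σ y → blockTag b φ x = blockTag b φ y := by
    intro hxy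
    rw [blockTag_eq_blockTag_iff, ← hcut, ← hcut, ← hσ.le_iff_le_of_covBy hab hjump,
      ← hσ.le_iff_le_of_covBy hab hjump, hxy, hcomp]
    exact ⟨Iff.rfl, by simp [hxy]⟩
  refine ⟨fun h => ?_, fun h => not_lt.1 fun h' => (hlt y x h').not_ge h⟩
  rcases h.lt_or_eq with h | h
  · exact (hlt x y h).le
  · exact (heq x y h).le

/-- every weak `(p,q)`-quasi-shuffle `φ` factors uniquely as
`φ = δ ∘ σ` with `σ : {1,…,p+q} ↠ {1,…,t}` a nondecreasing surjection
satisfying `σ(p) < σ(p+1)` (so `t ≥ 2`), and `δ : {1,…,t} ↠ {1,…,s}` a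
`(σ(p), t - σ(p))`-quasi-shuffle. -/
theorem weakQSh_unique_factorization (p q s : ℕ) (hp : 0 < p) (hq : 0 < q)
    (φ : Fin (p + q) → Fin s) (hφ : IsWeakQSh p q s φ) :
    ∃! x : Σ t : ℕ, (Fin (p + q) → Fin t) × (Fin t → Fin s),
      2 ≤ x.1 ∧
      Function.Surjective x.2.1 ∧ Monotone x.2.1 ∧
      x.2.1 ⟨p - 1, by omega⟩ < x.2.1 ⟨p, by omega⟩ ∧
      IsQShCut x.1 s ((x.2.1 ⟨p - 1, by omega⟩).val + 1) x.2.2 ∧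
      φ = x.2.2 ∘ x.2.1 := by
  obtain ⟨t, σ, e, hσs, hg⟩ := exists_surjective_fin_orderEmbedding_comp (blockTag p φ)
  have hle a b : σ a ≤ σ b ↔ blockTag p φ a ≤ blockTag p φ b := by simp [← hg]
  have hσ : Monotone σ := fun a b hab => (hle a b).2 (hφ.monotone_blockTag hab)
  have hjump : σ ⟨p - 1, by omega⟩ < σ ⟨p, by omega⟩ := by
    rw [← not_le, hle, not_le, blockTag_lt_blockTag_iff]
    exact Or.inl ⟨by simp only; omega, le_rfl⟩
  have hcov : (⟨p - 1, by omega⟩ : Fin (p + q)) ⋖ ⟨p, by omega⟩ :=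
    Fin.covBy_iff.2 (Nat.covBy_iff_add_one_eq.2 (by simp only; omega))
  let δ : Fin t → Fin s := fun v => (ofLex (e v)).2
  have hcomp : φ = δ ∘ σ := funext fun i => congrArg (fun x => (ofLex x).2) (congrFun hg i).symm
  refine ⟨⟨t, σ, δ⟩, ⟨?_, hσs, hσ, hjump, ?_, hcomp⟩, ?_⟩
  · have := Fin.lt_def.1 hjump
    have := (σ ⟨p, by omega⟩).isLt
    dsimp only
    omega
  · refine (isQShCut_iff_of_covBy hσs hσ hcov hjump).2
      ⟨.of_comp (hcomp ▸ hφ.1), fun a b hsame h => ?_⟩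
    rw [← not_le, hle, not_le, blockTag_lt_blockTag_iff, hcomp] at h
    simp only [Fin.le_def] at hsame
    exact (h.resolve_left (by omega)).2
  · rintro ⟨t', σ', δ'⟩ ⟨-, hσ's, hσ', hjump', hδ', hcomp'⟩
    obtain ⟨rfl, hval⟩ := Fin.val_eq_of_surjective_of_le_iff_le hσs hσ's fun a b =>
      (hle a b).trans (le_iff_blockTag_le_of_comp_eq hσ's hσ' hcov hjump' hδ' hcomp' a b).symm
    obtain rfl : σ' = σ := funext fun a => Fin.ext (hval a).symm
    obtain rfl : δ' = δ := hσs.injective_comp_right (hcomp'.symm.trans hcomp)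
    rfl
end
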